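/- Let V and E be finite types with DecidableEq E, let s, t : E → V encode a finite multigraph G, and fix an edge e₀ ∈ E. Define the subdivided multigraph G' with vertex type V' = V ⊕ Unit and edge type E' = E ⊕ Unit, where s'(inl e) = inl (s e), t'(inl e) = inr () if e = e₀ and t'(inl e) = inl (t e) otherwise, and where the new edge inr () has s'(inr ()) = inr () and t'(inr ()) = inl (t e₀). Then the linear map from the space of harmonic 1-forms on G' to the space of harmonic 1-forms on G given by ω' ↦ (e ↦ ω'(inl e)) is a linear isomorphism of real vector spaces; its inverse assigns to a harmonic form ω on G the form on G' taking the value ω e on inl e and the value ω e₀ on the new edge inr (). -/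

import Mathlib

/-!
The balance condition at the new vertex says exactly that the new edge carries the same value
as `e₀`. Granting this, the new edge takes the place of `e₀` among the incoming edges of
`t e₀`, so the balance conditions at the old vertices are those of the original graph.
-/

open Finset

/-- The space of harmonic 1-forms on the finite multigraph encoded by `s t : E → V`:
functions `ω : E → ℝ` such that at every vertex the sum of `ω` over outgoing edges
equals the sum over incoming edges. -/
def harmonicForms {V E : Type*} [Fintype E] [DecidableEq V] (s t : E → V) :
    Submodule ℝ (E → ℝ) where
  carrier := {ω | ∀ v : V, ∑ e ∈ univ.filter (fun e => s e = v), ω e =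
      ∑ e ∈ univ.filter (fun e => t e = v), ω e}
  add_mem' := by
    intro a b ha hb v
    simp only [Set.mem_setOf_eq] at *
    simp only [Pi.add_apply, Finset.sum_add_distrib, ha v, hb v]
  zero_mem' := by
    intro v
    simp
  smul_mem' := by
    intro c a ha v
    simp only [Set.mem_setOf_eq] at *
    simp only [Pi.smul_apply, smul_eq_mul, ← Finset.mul_sum, ha v]

/-- The start-vertex map of the multigraph obtained by subdividing the edge `e₀`:
the old edge `e` keeps its start vertex, and the new edge starts at the new vertex. -/
def subdivS {V E : Type*} (s : E → V) : E ⊕ Unit → V ⊕ Unit :=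
  Sum.elim (fun e => Sum.inl (s e)) (fun _ => Sum.inr ())

/-- The end-vertex map of the multigraph obtained by subdividing the edge `e₀`:
the edge `e₀` now ends at the new vertex `Sum.inr ()`, every other old edge keeps its
end vertex, and the new edge ends at `t e₀`. -/
def subdivT {V E : Type*} [DecidableEq E] (t : E → V) (e₀ : E) : E ⊕ Unit → V ⊕ Unit :=
  Sum.elim (fun e => if e = e₀ then Sum.inr () else Sum.inl (t e)) (fun _ => Sum.inl (t e₀))

section Subdivision

variable {V E : Type*} (s t : E → V)

@[simp] lemma subdivS_inl (e : E) : subdivS s (.inl e) = .inl (s e) := rfl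

@[simp] lemma subdivS_inr (u : Unit) : subdivS s (.inr u) = .inr () := rfl

variable [DecidableEq E] (e₀ : E)

@[simp] lemma subdivT_inl_self : subdivT t e₀ (.inl e₀) = .inr () := if_pos rfl

lemma subdivT_inl_of_ne {e : E} (he : e ≠ e₀) : subdivT t e₀ (.inl e) = .inl (t e) := if_neg he

@[simp] lemma subdivT_inr (u : Unit) : subdivT t e₀ (.inr u) = .inl (t e₀) := rfl

variable [Fintype E] [DecidableEq V] (ω' : E ⊕ Unit → ℝ)

omit [DecidableEq E] in
lemma sum_subdivS_eq_inl (v : V) :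
    ∑ e ∈ univ.filter (fun e => subdivS s e = .inl v), ω' e =
      ∑ e ∈ univ.filter (fun e => s e = v), ω' (.inl e) := by
  rw [sum_filter, sum_filter, Fintype.sum_sum_type]
  simp

omit [DecidableEq E] in
lemma sum_subdivS_eq_inr :
    ∑ e ∈ univ.filter (fun e => subdivS s e = .inr ()), ω' e = ω' (.inr ()) := by
  rw [sum_filter, Fintype.sum_sum_type]
  simp

lemma sum_subdivT_eq_inr :
    ∑ e ∈ univ.filter (fun e => subdivT t e₀ e = .inr ()), ω' e = ω' (.inl e₀) := by
  rw [sum_filter, Fintype.sum_sum_type, Fintype.sum_eq_add_sum_compl e₀]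
  simp only [subdivT_inl_self, subdivT_inr, ↓reduceIte, reduceCtorEq, Fintype.sum_unique,
    add_zero, add_eq_left]
  exact sum_eq_zero fun e he => by simp [subdivT_inl_of_ne t e₀ (by simpa using he : e ≠ e₀)]

lemma sum_subdivT_eq_inl (h : ω' (.inr ()) = ω' (.inl e₀)) (v : V) :
    ∑ e ∈ univ.filter (fun e => subdivT t e₀ e = .inl v), ω' e =
      ∑ e ∈ univ.filter (fun e => t e = v), ω' (.inl e) := by
  rw [sum_filter, sum_filter, Fintype.sum_sum_type, Fintype.sum_eq_add_sum_compl e₀,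
    Fintype.sum_eq_add_sum_compl e₀ (fun e => if t e = v then _ else _)]
  simp only [subdivT_inl_self, subdivT_inr, h, reduceCtorEq, ↓reduceIte, zero_add,
    Fintype.sum_unique, Sum.inl.injEq, add_comm, add_right_inj]
  exact sum_congr rfl fun e he => by simp [subdivT_inl_of_ne t e₀ (by simpa using he : e ≠ e₀)]

theorem mem_harmonicForms_subdiv_iff :
    ω' ∈ harmonicForms (subdivS s) (subdivT t e₀) ↔
      ω' (.inr ()) = ω' (.inl e₀) ∧ (fun e => ω' (.inl e)) ∈ harmonicForms s t := by
  constructor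
  · intro h
    have hnew : ω' (.inr ()) = ω' (.inl e₀) := by
      simpa only [sum_subdivS_eq_inr, sum_subdivT_eq_inr] using h (.inr ())
    refine ⟨hnew, fun v => ?_⟩
    simpa only [sum_subdivS_eq_inl, sum_subdivT_eq_inl t e₀ ω' hnew] using h (.inl v)
  · rintro ⟨hnew, h⟩ (v | ⟨⟩)
    · rw [sum_subdivS_eq_inl, sum_subdivT_eq_inl t e₀ ω' hnew]
      exact h v
    · rw [sum_subdivS_eq_inr, sum_subdivT_eq_inr, hnew]

def harmonicFormsSubdivEquiv :
    harmonicForms (subdivS s) (subdivT t e₀) ≃ₗ[ℝ] harmonicForms s t where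
  toFun ω' := ⟨fun e => (ω' : E ⊕ Unit → ℝ) (.inl e),
    ((mem_harmonicForms_subdiv_iff s t e₀ _).1 ω'.2).2⟩
  invFun ω := ⟨Sum.elim ω (fun _ => (ω : E → ℝ) e₀),
    (mem_harmonicForms_subdiv_iff s t e₀ _).2 ⟨rfl, ω.2⟩⟩
  map_add' _ _ := rfl
  map_smul' _ _ := rfl
  left_inv ω' := Subtype.ext <| funext <| Sum.rec (fun _ => rfl)
    fun _ => ((mem_harmonicForms_subdiv_iff s t e₀ _).1 ω'.2).1.symm
  right_inv _ := rfl

end Subdivision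

theorem harmonicForms_subdivision_equiv_general {V E : Type*} [Fintype E]
    [DecidableEq V] [DecidableEq E] (s t : E → V) (e₀ : E) :
    ∃ φ : harmonicForms (subdivS s) (subdivT t e₀) ≃ₗ[ℝ] harmonicForms s t,
      (∀ ω', (φ ω' : E → ℝ) = fun e => (ω' : E ⊕ Unit → ℝ) (Sum.inl e)) ∧
      (∀ ω, (φ.symm ω : E ⊕ Unit → ℝ) =
        Sum.elim (ω : E → ℝ) (fun _ => (ω : E → ℝ) e₀)) :=
  ⟨harmonicFormsSubdivEquiv s t e₀, fun _ => rfl, fun _ => rfl⟩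

/-- **Subdivision invariance of harmonic 1-forms.** Subdividing the edge `e₀` of the
finite multigraph encoded by `s t : E → V` yields a multigraph whose space of harmonic
1-forms is linearly isomorphic to that of the original graph, via restriction to the
old edges; the inverse extends a form `ω` by the value `ω e₀` on the new edge. -/
theorem harmonicForms_subdivision_equiv {V E : Type*} [Fintype V] [Fintype E]
    [DecidableEq V] [DecidableEq E] (s t : E → V) (e₀ : E) :
    ∃ φ : harmonicForms (subdivS s) (subdivT t e₀) ≃ₗ[ℝ] harmonicForms s t,
      (∀ ω', (φ ω' : E → ℝ) = fun e => (ω' : E ⊕ Unit → ℝ) (Sum.inl e)) ∧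
      (∀ ω, (φ.symm ω : E ⊕ Unit → ℝ) =
        Sum.elim (ω : E → ℝ) (fun _ => (ω : E → ℝ) e₀)) :=
  harmonicForms_subdivision_equiv_general s t e₀
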